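/- arXiv:2512.06188 — 3 statements merged into one kernel-verified Lean document; each statement's English description precedes it below -/
import Mathlib

section
/- The cones R^(r) are nested: for 0 < s ≤ r ≤ n/2 (with s, r positive integers), R^(s) ⊆ R^(r). -/
open Finset
open scoped BigOperators

/-- The cone `A^(p) = {λ ∈ ℝⁿ : (p-2) λ_k + Σᵢ λᵢ ≥ 0 for every k}`. -/
def Acone (n : ℕ) (p : ℝ) : Set (Fin n → ℝ) :=
  {l | ∀ k, 0 ≤ (p - 2) * l k + ∑ i, l i}

/-- The cone `R^(r)`: all `λ ∈ ℝⁿ` such that for every rearrangement of `λ`,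
`(n-r) Σ_{k≤r} λ_{i_k} + r Σ_{k>r} λ_{i_k} ≥ 0`. -/
def Rcone (n r : ℕ) : Set (Fin n → ℝ) :=
  {l | ∀ σ : Equiv.Perm (Fin n),
    0 ≤ ((n : ℝ) - r) * ∑ i ∈ Finset.univ.filter (fun i : Fin n => (i : ℕ) < r), l (σ i)
        + (r : ℝ) * ∑ i ∈ Finset.univ.filter (fun i : Fin n => r ≤ (i : ℕ)), l (σ i)}

lemma my_card_filter_lt (n s : ℕ) (hsn : s ≤ n) :
    (univ.filter (fun i : Fin n => (i : ℕ) < s)).card = s := by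
  have : (univ.filter (fun i : Fin n => (i : ℕ) < s)) =
      (Finset.range s).attachFin (fun m hm => lt_of_lt_of_le (Finset.mem_range.mp hm) hsn) := by
    ext i
    simp [Finset.mem_attachFin]
  rw [this, Finset.card_attachFin, Finset.card_range]

lemma my_exists_perm_image (n s : ℕ) (hsn : s ≤ n) (S : Finset (Fin n)) (hS : S.card = s) :
    ∃ σ : Equiv.Perm (Fin n),
      (univ.filter (fun i : Fin n => (i : ℕ) < s)).image σ = S := by
  classical
  set A := univ.filter (fun i : Fin n => (i : ℕ) < s) with hA
  have hAcard : A.card = s := my_card_filter_lt n s hsn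
  have h1 : Fintype.card {x : Fin n // x ∈ A} = Fintype.card {x : Fin n // x ∈ S} := by
    simp only [Fintype.card_coe, hAcard, hS]
  have h2 : Fintype.card {x : Fin n // ¬ x ∈ A} = Fintype.card {x : Fin n // ¬ x ∈ S} := by
    rw [Fintype.card_subtype_compl, Fintype.card_subtype_compl, h1]
  let e := Fintype.equivOfCardEq h1
  let f := Fintype.equivOfCardEq h2
  refine ⟨Equiv.subtypeCongr e f, ?_⟩
  apply Finset.eq_of_subset_of_card_le
  · intro y hy
    rcases Finset.mem_image.mp hy with ⟨x, hx, rfl⟩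
    have : Equiv.subtypeCongr e f x = (e ⟨x, hx⟩ : Fin n) := by
      simp [Equiv.subtypeCongr, hx]
    rw [this]
    exact (e ⟨x, hx⟩).2
  · rw [Finset.card_image_of_injective _ (Equiv.injective _), hAcard, hS]

lemma my_key (n s : ℕ) (l : Fin n → ℝ) (hs : 0 < s)
    (h : ∀ S : Finset (Fin n), S.card = s →
      0 ≤ ((n : ℝ) - 2 * s) * ∑ x ∈ S, l x + s * ∑ i, l i) :
    ∀ m, s ≤ m → ∀ M : Finset (Fin n), M.card = m →
      0 ≤ ((n : ℝ) - 2 * s) * ∑ x ∈ M, l x + m * ∑ i, l i := by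
  refine Nat.le_induction h ?_
  intro m hm IH M hM
  have hm1 : (1 : ℝ) ≤ m := by exact_mod_cast le_trans hs hm
  have hsum : ∀ x ∈ M, 0 ≤ ((n : ℝ) - 2 * s) * ∑ y ∈ M.erase x, l y + m * ∑ i, l i := by
    intro x hx
    exact IH (M.erase x) (by rw [Finset.card_erase_of_mem hx, hM]; rfl)
  have h2 := Finset.sum_nonneg hsum
  have herase : ∀ x ∈ M, ∑ y ∈ M.erase x, l y = (∑ y ∈ M, l y) - l x :=
    fun x hx => Finset.sum_erase_eq_sub hx
  have h3 : ∑ x ∈ M, (((n : ℝ) - 2 * s) * ∑ y ∈ M.erase x, l y + m * ∑ i, l i)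
      = (m : ℝ) * (((n : ℝ) - 2 * s) * ∑ x ∈ M, l x + ((m : ℝ) + 1) * ∑ i, l i) := by
    rw [Finset.sum_congr rfl (fun x hx => by rw [herase x hx])]
    simp only [mul_sub, Finset.sum_add_distrib, Finset.sum_sub_distrib, Finset.sum_const, hM,
      nsmul_eq_mul, ← Finset.mul_sum]
    push_cast
    ring
  rw [h3] at h2
  have hgoal : 0 ≤ ((n : ℝ) - 2 * s) * ∑ x ∈ M, l x + ((m : ℝ) + 1) * ∑ i, l i := by
    by_contra hcon
    push_neg at hcon
    nlinarith [h2, hm1, hcon]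
  push_cast
  linarith [hgoal]

lemma my_set_form (n s : ℕ) (hsn : s ≤ n) (l : Fin n → ℝ) (hl : l ∈ Rcone n s) :
    ∀ S : Finset (Fin n), S.card = s →
      0 ≤ ((n : ℝ) - 2 * s) * ∑ x ∈ S, l x + s * ∑ i, l i := by
  intro S hS
  obtain ⟨σ, hσ⟩ := my_exists_perm_image n s hsn S hS
  have h := hl σ
  have hinj : Function.Injective σ := σ.injective
  have e1 : ∑ i ∈ univ.filter (fun i : Fin n => (i : ℕ) < s), l (σ i) = ∑ x ∈ S, l x := by
    rw [← hσ, Finset.sum_image (fun x _ y _ hxy => hinj hxy)]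
  have hsplit : ∑ i ∈ univ.filter (fun i : Fin n => (i : ℕ) < s), l (σ i)
      + ∑ i ∈ univ.filter (fun i : Fin n => s ≤ (i : ℕ)), l (σ i) = ∑ i, l (σ i) := by
    rw [← Finset.sum_filter_add_sum_filter_not univ (fun i : Fin n => (i : ℕ) < s)
      (fun i => l (σ i))]
    congr 1
    refine Finset.sum_congr ?_ (fun _ _ => rfl)
    ext i
    simp [not_lt]
  have htot : ∑ i, l (σ i) = ∑ i, l i := Equiv.sum_comp σ l
  have e2 : ∑ i ∈ univ.filter (fun i : Fin n => s ≤ (i : ℕ)), l (σ i)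
      = ∑ i, l i - ∑ x ∈ S, l x := by
    rw [e1, htot] at hsplit
    linarith
  rw [e1, e2] at h
  linear_combination h

/-- the cones `R^(r)` are nested: `R^(s) ⊆ R^(r)` for integers
`0 < s ≤ r ≤ n/2`. -/
theorem Rcone_nested (n s r : ℕ) (hs : 0 < s) (hsr : s ≤ r) (hr : 2 * r ≤ n) :
    Rcone n s ⊆ Rcone n r := by
  intro l hl σ
  have hsn : s ≤ n := by omega
  have hsn' : s < n := by omega
  have hkey := my_key n s l hs (my_set_form n s hsn l hl)
  -- total sum nonneg
  have hTn := hkey n (by omega) univ (by simp)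
  have hT0 : 0 ≤ ∑ i, l i := by
    by_contra hcon
    push_neg at hcon
    have hns : (s : ℝ) < n := by exact_mod_cast hsn'
    nlinarith [hTn, hcon, hns]
  -- the r-set
  have hAcard : (univ.filter (fun i : Fin n => (i : ℕ) < r)).card = r :=
    my_card_filter_lt n r (by omega)
  set R := (univ.filter (fun i : Fin n => (i : ℕ) < r)).image σ with hR
  have hRcard : R.card = r := by
    rw [hR, Finset.card_image_of_injective _ σ.injective, hAcard]
  have hC := hkey r hsr R hRcard
  have e1 : ∑ i ∈ univ.filter (fun i : Fin n => (i : ℕ) < r), l (σ i) = ∑ x ∈ R, l x := by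
    rw [hR, Finset.sum_image (fun x _ y _ hxy => σ.injective hxy)]
  have hsplit : ∑ i ∈ univ.filter (fun i : Fin n => (i : ℕ) < r), l (σ i)
      + ∑ i ∈ univ.filter (fun i : Fin n => r ≤ (i : ℕ)), l (σ i) = ∑ i, l (σ i) := by
    rw [← Finset.sum_filter_add_sum_filter_not univ (fun i : Fin n => (i : ℕ) < r)
      (fun i => l (σ i))]
    congr 1
    refine Finset.sum_congr ?_ (fun _ _ => rfl)
    ext i
    simp [not_lt]
  have htot : ∑ i, l (σ i) = ∑ i, l i := Equiv.sum_comp σ l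
  have e2 : ∑ i ∈ univ.filter (fun i : Fin n => r ≤ (i : ℕ)), l (σ i)
      = ∑ i, l i - ∑ x ∈ R, l x := by
    rw [e1, htot] at hsplit
    linarith
  rw [e1, e2]
  have hrn : 2 * (r : ℝ) ≤ n := by exact_mod_cast hr
  have hsrR : (s : ℝ) ≤ r := by exact_mod_cast hsr
  rcases le_or_gt (∑ x ∈ R, l x) 0 with hcase | hcase
  · nlinarith [hC, mul_nonneg (by linarith : (0:ℝ) ≤ 2 * (r:ℝ) - 2 * s)
      (by linarith : (0:ℝ) ≤ -(∑ x ∈ R, l x)), hT0]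
  · nlinarith [mul_nonneg (by linarith : (0:ℝ) ≤ (n:ℝ) - 2 * r) (le_of_lt hcase),
      mul_nonneg (by positivity : (0:ℝ) ≤ (r:ℝ)) hT0]
end

section
/- For p ∈ [2, ∞) and any integer r with (n-p)/2 + 1 ≤ r ≤ n/2, the cone inclusion A^(p) ⊆ R^(r) holds. In particular A^(2) = R^(n/2) when n is even. -/
open Finset
open scoped BigOperators

lemma card_filter_lt_aux (n r : ℕ) (h : r ≤ n) :
    (Finset.univ.filter (fun i : Fin n => (i : ℕ) < r)).card = r := by
  have hmap : (Finset.univ.filter (fun i : Fin n => (i : ℕ) < r)).map Fin.valEmbedding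
      = Finset.range r := by
    ext x
    simp only [mem_map, mem_filter, mem_univ, true_and, Fin.valEmbedding_apply, mem_range]
    constructor
    · rintro ⟨i, hi, rfl⟩; exact hi
    · intro hx; exact ⟨⟨x, lt_of_lt_of_le hx h⟩, hx, rfl⟩
  calc (Finset.univ.filter (fun i : Fin n => (i : ℕ) < r)).card
      = ((Finset.univ.filter (fun i : Fin n => (i : ℕ) < r)).map Fin.valEmbedding).card :=
        (Finset.card_map _).symm
    _ = r := by rw [hmap, Finset.card_range]

lemma sum_filter_split (n r : ℕ) (f : Fin n → ℝ) :
    (∑ i ∈ Finset.univ.filter (fun i : Fin n => (i : ℕ) < r), f i)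
      + ∑ i ∈ Finset.univ.filter (fun i : Fin n => r ≤ (i : ℕ)), f i = ∑ i, f i := by
  have h := Finset.sum_filter_add_sum_filter_not Finset.univ
    (fun i : Fin n => (i : ℕ) < r) f
  have : Finset.univ.filter (fun i : Fin n => ¬ (i : ℕ) < r)
      = Finset.univ.filter (fun i : Fin n => r ≤ (i : ℕ)) := by
    apply Finset.filter_congr; intro i _; simp [not_lt]
  rw [this] at h
  exact h

lemma Acone_sum_nonneg (n : ℕ) (p : ℝ) (hp : 2 ≤ p) {l : Fin n → ℝ}
    (hl : l ∈ Acone n p) : 0 ≤ ∑ i, l i := by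
  rcases Nat.eq_zero_or_pos n with h0 | h0
  · subst h0; simp
  · have hsum : 0 ≤ ∑ k, ((p - 2) * l k + ∑ i, l i) :=
      Finset.sum_nonneg fun k _ => hl k
    have heq : ∑ k, ((p - 2) * l k + ∑ i, l i)
        = (p - 2 + n) * ∑ i, l i := by
      rw [Finset.sum_add_distrib, ← Finset.mul_sum, Finset.sum_const, Finset.card_univ,
        Fintype.card_fin, nsmul_eq_mul]
      ring
    rw [heq] at hsum
    have hpos : 0 < p - 2 + n := by
      have : (1 : ℝ) ≤ (n : ℝ) := by exact_mod_cast h0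
      linarith
    exact nonneg_of_mul_nonneg_right hsum hpos

lemma Acone_subset_Rcone_aux (n : ℕ) (p : ℝ) (r : ℕ) (hp : 2 ≤ p)
    (hr1 : ((n : ℝ) - p) / 2 + 1 ≤ (r : ℝ)) (hr2 : 2 * r ≤ n) :
    Acone n p ⊆ Rcone n r := by
  intro l hl σ
  set S : ℝ := ∑ i, l i with hSdef
  have hS : 0 ≤ S := Acone_sum_nonneg n p hp hl
  set T := Finset.univ.filter (fun i : Fin n => (i : ℕ) < r) with hT
  set Tc := Finset.univ.filter (fun i : Fin n => r ≤ (i : ℕ)) with hTc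
  have hsplit : (∑ i ∈ T, l (σ i)) + ∑ i ∈ Tc, l (σ i) = ∑ i, l (σ i) :=
    sum_filter_split n r (fun i => l (σ i))
  have hperm : ∑ i, l (σ i) = S := Equiv.sum_comp σ l
  rw [hperm] at hsplit
  have hn2r : (0 : ℝ) ≤ (n : ℝ) - 2 * r := by
    have : (2 * r : ℝ) ≤ (n : ℝ) := by exact_mod_cast hr2
    linarith
  have hc : (0 : ℝ) ≤ p - 2 + 2 * r - n := by linarith
  have hrn : r ≤ n := by omega
  have hcard : T.card = r := card_filter_lt_aux n r hrn
  -- goal is 0 ≤ (n - r) * ΣT + r * ΣTc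
  have hgoal : ((n : ℝ) - r) * (∑ i ∈ T, l (σ i)) + (r : ℝ) * (∑ i ∈ Tc, l (σ i))
      = (r : ℝ) * S + ((n : ℝ) - 2 * r) * ∑ i ∈ T, l (σ i) := by
    have : (∑ i ∈ Tc, l (σ i)) = S - ∑ i ∈ T, l (σ i) := by linarith
    rw [this]; ring
  rw [hgoal]
  rcases eq_or_lt_of_le hp with hp2 | hp2
  · -- p = 2 : then n = 2r and the term with ΣT vanishes
    have hn : (n : ℝ) = 2 * r := by
      rw [← hp2] at hc; linarith
    rw [hn]
    have : (2 : ℝ) * r - 2 * r = 0 := by ring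
    rw [this, zero_mul, add_zero]
    positivity
  · -- p > 2 : bound ΣT from below
    have hbound : -(r : ℝ) * S ≤ (p - 2) * ∑ i ∈ T, l (σ i) := by
      have h1 : ∑ i ∈ T, (-S) ≤ ∑ i ∈ T, (p - 2) * l (σ i) := by
        apply Finset.sum_le_sum
        intro i _
        have := hl (σ i)
        linarith
      rw [Finset.sum_const, hcard, nsmul_eq_mul, ← Finset.mul_sum] at h1
      linarith
    have hp2' : 0 < p - 2 := by linarith
    have key : 0 ≤ (p - 2) * ((r : ℝ) * S + ((n : ℝ) - 2 * r) * ∑ i ∈ T, l (σ i)) := by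
      have h2 : ((n : ℝ) - 2 * r) * (-(r : ℝ) * S)
          ≤ ((n : ℝ) - 2 * r) * ((p - 2) * ∑ i ∈ T, l (σ i)) :=
        mul_le_mul_of_nonneg_left hbound hn2r
      have h3 : 0 ≤ (r : ℝ) * S * (p - 2 + 2 * r - n) := by positivity
      nlinarith
    exact nonneg_of_mul_nonneg_right (by linarith [key]) hp2'

/-- for `p ∈ [2, ∞)` and any integer `r` with
`(n-p)/2 + 1 ≤ r ≤ n/2`, one has `A^(p) ⊆ R^(r)`; in particular
`A^(2) = R^(n/2)` when `n` is even. -/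
theorem Acone_subset_Rcone (n : ℕ) (p : ℝ) (r : ℕ) (hp : 2 ≤ p)
    (hr1 : ((n : ℝ) - p) / 2 + 1 ≤ (r : ℝ)) (hr2 : 2 * r ≤ n) :
    Acone n p ⊆ Rcone n r ∧ (Even n → Acone n 2 = Rcone n (n / 2)) := by
  constructor
  · exact Acone_subset_Rcone_aux n p r hp hr1 hr2
  · intro hn
    obtain ⟨m, hm⟩ := hn
    have hnm : n = 2 * m := by omega
    have hm' : n / 2 = m := by omega
    apply Set.Subset.antisymm
    · apply Acone_subset_Rcone_aux n 2 (n / 2) le_rfl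
      · rw [hm', hnm]; push_cast; linarith
      · omega
    · intro l hl k
      have h1 := hl 1
      simp only [Equiv.Perm.coe_one, id_eq] at h1
      rw [hm'] at h1
      have hsplit : (∑ i ∈ Finset.univ.filter (fun i : Fin n => (i : ℕ) < m), l i)
          + ∑ i ∈ Finset.univ.filter (fun i : Fin n => m ≤ (i : ℕ)), l i = ∑ i, l i :=
        sum_filter_split n m l
      have hS : 0 ≤ ∑ i, l i := by
        rcases Nat.eq_zero_or_pos m with h0 | h0
        · have : n = 0 := by omega
          subst this; simp
        · have hnm' : (n : ℝ) - m = m := by rw [hnm]; push_cast; ring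
          rw [hnm'] at h1
          have hm0 : (0 : ℝ) < m := by exact_mod_cast h0
          nlinarith
      linarith
end

section
/- For the Gårding cone Γ^k with 1 ≤ k ≤ n/2, the critical exponent p_{Γ^k} = max{p : Γ^k ⊆ A^(p)} equals n(k-1)/(n-k) + 2, and this value lies in [2, n]. -/
open Finset
open scoped BigOperators

/-- The Gårding cone `Γ^k = {λ ∈ ℝⁿ : σ₁(λ) ≥ 0, ..., σ_k(λ) ≥ 0}`. -/
def GardingCone (n k : ℕ) : Set (Fin n → ℝ) :=
  {l | ∀ j ∈ Finset.Icc 1 k, 0 ≤ (Multiset.map l Finset.univ.val).esymm j}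

/-!
Let `λ ∈ Γ^k` have a negative entry `λ_i = -t` and let `μ` be the other `n - 1` entries.
Expanding `σ_{j+1}(λ) = σ_{j+1}(μ) - t σ_j(μ) ≥ 0` gives `t σ_j(μ) ≤ σ_{j+1}(μ)` for `j < k`,
so `σ_j(μ) ≥ t^j > 0` for `j ≤ k`. Newton's inequalities `E_j E_{j+2} ≤ E_{j+1}²` for the
means `E_j = σ_j / C(n-1, j)` then give `E_k ≤ E_{k-1} E_1`, hence
`t ≤ σ_k(μ) / σ_{k-1}(μ) ≤ (n - k) σ_1(μ) / (k (n - 1))`, which says exactly that `λ ∈ A^(p)`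
for `p = n(k-1)/(n-k) + 2`. Newton's inequalities are reduced by Rolle's theorem
(differentiating `∏ (X - μ_i)` keeps the means) to `j + 2` numbers, where for the reciprocals
they become Cauchy–Schwarz. The vector with one entry `-(n - k)` and all others `k` lies in
`Γ^k` and attains equality, so no larger `p` works.
-/

theorem Polynomial.card_roots_derivative_eq_natDegree {p : Polynomial ℝ}
    (hp : Multiset.card p.roots = p.natDegree) :
    Multiset.card p.derivative.roots = p.derivative.natDegree := by
  have := p.card_roots_le_derivative
  have := p.natDegree_derivative_le
  exact le_antisymm (card_roots' _) (by omega)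

namespace Multiset

section CommSemiring

variable {R : Type*} [CommSemiring R]

@[simp] theorem esymm_zero (s : Multiset R) : s.esymm 0 = 1 := by
  simp [esymm, powersetCard_zero_left]

theorem esymm_one (s : Multiset R) : s.esymm 1 = s.sum := by
  simp [esymm, powersetCard_one, map_map]

theorem esymm_eq_zero_of_card_lt {s : Multiset R} {j : ℕ} (h : card s < j) : s.esymm j = 0 := by
  simp [esymm, powersetCard_eq_empty _ h]

theorem esymm_cons_succ (a : R) (s : Multiset R) (j : ℕ) :
    (a ::ₘ s).esymm (j + 1) = s.esymm (j + 1) + a * s.esymm j := by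
  simp [esymm, powersetCard_cons, map_map, sum_map_mul_left]

theorem esymm_card (s : Multiset R) : s.esymm (card s) = s.prod := by
  induction s using Multiset.induction_on with
  | empty => simp
  | cons a s ih => simp [esymm_cons_succ, esymm_eq_zero_of_card_lt, ih]

theorem esymm_replicate (m j : ℕ) (a : R) : (replicate m a).esymm j = m.choose j * a ^ j := by
  induction m generalizing j with
  | zero => cases j <;> simp [esymm, powersetCard_zero_right]
  | succ m ih =>
    cases j with
    | zero => simp
    | succ j =>
      rw [replicate_succ, esymm_cons_succ, ih, ih, Nat.choose_succ_succ']
      push_cast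
      ring

end CommSemiring

theorem sq_sum_eq_sum_sq_add_two_mul_esymm_two {R : Type*} [CommRing R] (s : Multiset R) :
    s.sum ^ 2 = (s.map (· ^ 2)).sum + 2 * s.esymm 2 := by
  induction s using Multiset.induction_on with
  | empty => simp [esymm, powersetCard_zero_right]
  | cons a s ih =>
    rw [sum_cons, map_cons, sum_cons, esymm_cons_succ, esymm_one]
    linear_combination ih

theorem esymm_map_inv_mul_prod {K : Type*} [Field K] {s : Multiset K} (hs : ∀ x ∈ s, x ≠ 0)
    {j : ℕ} (hj : j ≤ card s) : (s.map (·⁻¹)).esymm j * s.prod = s.esymm (card s - j) := by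
  induction s using Multiset.induction_on generalizing j with
  | empty => simp_all
  | cons a s ih =>
    have ha : a * a⁻¹ = 1 := mul_inv_cancel₀ (hs a (mem_cons_self a s))
    replace ih := @ih (fun x hx => hs x (mem_cons_of_mem hx))
    rw [card_cons] at hj ⊢
    cases j with
    | zero => rw [esymm_zero, one_mul, Nat.sub_zero, ← card_cons, esymm_card]
    | succ j =>
      rw [map_cons, esymm_cons_succ, prod_cons]
      rcases (Nat.le_of_succ_le_succ hj).lt_or_eq with hlt | rfl
      · obtain ⟨i, hi⟩ : ∃ i, card s - j = i + 1 := ⟨card s - j - 1, by omega⟩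
        rw [show card s + 1 - (j + 1) = i + 1 by omega, esymm_cons_succ, ← hi, ← ih hlt.le,
          show i = card s - (j + 1) by omega, ← ih hlt]
        linear_combination ((s.map (·⁻¹)).esymm j * s.prod) * ha
      · rw [esymm_eq_zero_of_card_lt (by simp), Nat.sub_self, esymm_zero]
        have := ih le_rfl
        rw [Nat.sub_self, esymm_zero] at this
        linear_combination ((s.map (·⁻¹)).esymm (card s) * s.prod) * ha + this

theorem sq_sum_le_card_mul_sum_sq {α : Type*} [CommSemiring α] [LinearOrder α]
    [IsStrictOrderedRing α] [ExistsAddOfLE α] (s : Multiset α) :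
    s.sum ^ 2 ≤ card s * (s.map (· ^ 2)).sum := by
  induction s using Quot.induction_on with
  | h l =>
    have hsq : ∑ i : Fin l.length, l[i.1] ^ 2 = (l.map (· ^ 2)).sum := by
      rw [← Fin.sum_univ_getElem (l.map (· ^ 2))]
      exact Fintype.sum_equiv (finCongr (by simp)) _ _ (by simp)
    simpa [Fin.sum_univ_getElem, hsq] using
      _root_.sq_sum_le_card_mul_sum_sq (s := univ) (f := fun i : Fin l.length => l[i.1])

noncomputable def esymmMean (s : Multiset ℝ) (j : ℕ) : ℝ := s.esymm j / (card s).choose j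

@[simp] theorem esymmMean_zero (s : Multiset ℝ) : s.esymmMean 0 = 1 := by
  simp [esymmMean]

theorem esymm_eq_choose_mul_esymmMean (s : Multiset ℝ) (j : ℕ) :
    s.esymm j = (card s).choose j * s.esymmMean j := by
  rcases lt_or_ge (card s) j with h | h
  · simp [esymm_eq_zero_of_card_lt h, esymmMean]
  · rw [esymmMean, mul_div_cancel₀]
    exact_mod_cast (Nat.choose_pos h).ne'

-- The witness is the multiset of critical points of `∏ (X - a)`, all real by Rolle's theorem.
open Polynomial in
theorem exists_card_eq_pred_esymmMean_eq (s : Multiset ℝ) :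
    ∃ s' : Multiset ℝ, card s' = card s - 1 ∧
      ∀ i ≤ card s - 1, s'.esymmMean i = s.esymmMean i := by
  rcases Nat.eq_zero_or_pos (card s) with hs | hs
  · exact ⟨s, by omega, fun _ _ => rfl⟩
  set m := card s
  set f := (s.map fun a => X - C a).prod
  have hf : f.natDegree = m := natDegree_multiset_prod_X_sub_C_eq_card s
  have hfm : f.Monic := monic_multiset_prod_of_monic _ _ fun a _ => monic_X_sub_C a
  have hlead : f.derivative.coeff (m - 1) = m := by
    rw [coeff_derivative, Nat.sub_add_cancel hs, ← hf, hfm.coeff_natDegree, hf,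
      Nat.cast_sub hs]
    ring
  have hdeg : f.derivative.natDegree = m - 1 :=
    natDegree_eq_of_le_of_coeff_ne_zero ((natDegree_derivative_le f).trans (by omega))
      (by rw [hlead]; positivity)
  have hroots : card f.derivative.roots = f.derivative.natDegree :=
    card_roots_derivative_eq_natDegree (by rw [roots_multiset_prod_X_sub_C, hf])
  refine ⟨f.derivative.roots, hroots.trans hdeg, fun i hi => ?_⟩
  have hcoeff := coeff_derivative f (m - 1 - i)
  rw [coeff_eq_esymm_roots_of_card hroots (by omega), leadingCoeff, hdeg, hlead,
    prod_X_sub_C_coeff s (by omega), show m - 1 - (m - 1 - i) = i by omega,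
    show m - (m - 1 - i + 1) = i by omega] at hcoeff
  have hchoose : ((m - 1).choose i : ℝ) * m = m.choose i * ((m - 1 - i : ℕ) + 1) := by
    have := Nat.choose_mul_succ_eq (m - 1) i
    rw [Nat.sub_add_cancel hs, show m - i = m - 1 - i + 1 by omega] at this
    exact_mod_cast this
  have hpos : (0 : ℝ) < ((m - 1 - i : ℕ) : ℝ) + 1 := by positivity
  have hc1 : (0 : ℝ) < (m - 1).choose i := by exact_mod_cast Nat.choose_pos hi
  have hc2 : (0 : ℝ) < m.choose i := by exact_mod_cast Nat.choose_pos (by omega)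
  rw [esymmMean, esymmMean, hroots, hdeg, div_eq_div_iff hc1.ne' hc2.ne']
  apply mul_right_cancel₀ (pow_ne_zero i (neg_ne_zero.mpr one_ne_zero) : ((-1 : ℝ) ^ i) ≠ 0)
  apply mul_right_cancel₀ hpos.ne'
  linear_combination
    ((m - 1).choose i : ℝ) * hcoeff - (f.derivative.roots.esymm i * (-1) ^ i) * hchoose

theorem exists_card_eq_esymmMean_eq (s : Multiset ℝ) {d : ℕ} (hd : d ≤ card s) :
    ∃ u : Multiset ℝ, card u = d ∧ ∀ i ≤ d, u.esymmMean i = s.esymmMean i := by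
  obtain ⟨c, hc⟩ := Nat.exists_eq_add_of_le hd
  induction c generalizing s with
  | zero => exact ⟨s, by omega, fun _ _ => rfl⟩
  | succ c ih =>
    obtain ⟨s', hs', hE'⟩ := exists_card_eq_pred_esymmMean_eq s
    obtain ⟨u, hu, hE⟩ := ih s' (by omega) (by omega)
    exact ⟨u, hu, fun i hi => (hE i hi).trans (hE' i (by omega))⟩

theorem two_mul_card_mul_esymm_mul_prod_le {K : Type*} [Field K] [LinearOrder K]
    [IsStrictOrderedRing K] {u : Multiset K} {d : ℕ} (hu : card u = d + 2) :
    2 * (d + 2) * (u.esymm d * u.prod) ≤ (d + 1) * u.esymm (d + 1) ^ 2 := by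
  by_cases h0 : (0 : K) ∈ u
  · rw [prod_eq_zero h0, mul_zero, mul_zero]
    positivity
  have hu0 : ∀ x ∈ u, x ≠ 0 := fun x hx hx0 => h0 (hx0 ▸ hx)
  set v := u.map (·⁻¹)
  have hv : card v = d + 2 := by simp [v, hu]
  have h1 : v.esymm 1 * u.prod = u.esymm (d + 1) := by
    rw [esymm_map_inv_mul_prod hu0 (by omega), hu]
    rfl
  have h2 : v.esymm 2 * u.prod = u.esymm d := by
    rw [esymm_map_inv_mul_prod hu0 (by omega), hu, Nat.add_sub_cancel]
  -- Cauchy–Schwarz for the reciprocals is the quadratic Newton inequality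
  have hv2 : 2 * (d + 2) * v.esymm 2 ≤ (d + 1) * v.esymm 1 ^ 2 := by
    have hcs := sq_sum_le_card_mul_sum_sq v
    rw [hv, sq_sum_eq_sum_sq_add_two_mul_esymm_two] at hcs
    rw [esymm_one, sq_sum_eq_sum_sq_add_two_mul_esymm_two]
    push_cast at hcs
    nlinarith
  rw [← h1, ← h2]
  nlinarith [mul_le_mul_of_nonneg_right hv2 (sq_nonneg u.prod)]

theorem esymmMean_mul_esymmMean_le_sq_of_card_eq {u : Multiset ℝ} {d : ℕ}
    (hu : card u = d + 2) : u.esymmMean d * u.esymmMean (d + 2) ≤ u.esymmMean (d + 1) ^ 2 := by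
  have key := two_mul_card_mul_esymm_mul_prod_le hu
  rw [← esymm_card, hu] at key
  have hc : ((d + 2).choose d : ℝ) = (d + 2) * (d + 1) / 2 := by
    rw [Nat.choose_symm_add, Nat.cast_choose_two]
    push_cast
    ring
  rw [esymmMean, esymmMean, esymmMean, hu, Nat.choose_self, Nat.choose_succ_self_right, hc]
  rw [div_mul_eq_mul_div, div_pow, div_le_div_iff₀ (by positivity) (by positivity)]
  push_cast
  nlinarith [key]

theorem esymmMean_mul_esymmMean_le_sq (s : Multiset ℝ) {j : ℕ} (hj : j + 2 ≤ card s) :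
    s.esymmMean j * s.esymmMean (j + 2) ≤ s.esymmMean (j + 1) ^ 2 := by
  obtain ⟨u, hu, hE⟩ := exists_card_eq_esymmMean_eq s hj
  rw [← hE j (by omega), ← hE (j + 1) (by omega), ← hE (j + 2) le_rfl]
  exact esymmMean_mul_esymmMean_le_sq_of_card_eq hu

theorem esymmMean_succ_le_mul_esymmMean_one {s : Multiset ℝ} {k : ℕ} (hk : k + 1 ≤ card s)
    (hpos : ∀ j ≤ k, 0 < s.esymmMean j) :
    s.esymmMean (k + 1) ≤ s.esymmMean k * s.esymmMean 1 := by
  induction k with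
  | zero => simp
  | succ k ih =>
    have ih := ih (by omega) fun j hj => hpos j (by omega)
    have hk0 := hpos k (by omega)
    have hk1 := hpos (k + 1) le_rfl
    refine le_of_mul_le_mul_left ?_ hk0
    calc s.esymmMean k * s.esymmMean (k + 2) ≤ s.esymmMean (k + 1) ^ 2 :=
          esymmMean_mul_esymmMean_le_sq s hk
      _ ≤ s.esymmMean (k + 1) * (s.esymmMean k * s.esymmMean 1) := by
          rw [sq]; exact mul_le_mul_of_nonneg_left ih hk1.le
      _ = s.esymmMean k * (s.esymmMean (k + 1) * s.esymmMean 1) := by ring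

theorem mul_succ_mul_card_le_esymm_one {μ : Multiset ℝ} {t : ℝ} {k : ℕ} (ht : 0 < t)
    (hk : k + 1 ≤ card μ) (h : ∀ j ≤ k, t * μ.esymm j ≤ μ.esymm (j + 1)) :
    t * (k + 1) * card μ ≤ (card μ - k) * μ.esymm 1 := by
  set m := card μ
  have hpow : ∀ j ≤ k + 1, t ^ j ≤ μ.esymm j := by
    intro j hj
    induction j with
    | zero => simp
    | succ j ih =>
      calc t ^ (j + 1) = t * t ^ j := pow_succ' t j
        _ ≤ t * μ.esymm j := mul_le_mul_of_nonneg_left (ih (by omega)) ht.le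
        _ ≤ μ.esymm (j + 1) := h j (by omega)
  have hchoose : ∀ j ≤ m, (0 : ℝ) < m.choose j := fun j hj => by
    exact_mod_cast Nat.choose_pos hj
  have hmean : ∀ j ≤ k + 1, 0 < μ.esymmMean j := fun j hj =>
    div_pos ((pow_pos ht j).trans_le (hpow j hj)) (hchoose j (by omega))
  have hmac := esymmMean_succ_le_mul_esymmMean_one hk fun j hj => hmean j (by omega)
  have hstep := h k le_rfl
  rw [esymm_eq_choose_mul_esymmMean, esymm_eq_choose_mul_esymmMean] at hstep
  have hE1 : μ.esymmMean 1 = μ.esymm 1 / m := by simp [esymmMean, m]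
  -- `t ≤ σ_{k+1} / σ_k` and `E_{k+1} / E_k ≤ E_1`
  have ht' : t * m.choose k ≤ m.choose (k + 1) * μ.esymmMean 1 := by
    refine le_of_mul_le_mul_right ?_ (hmean k (by omega))
    calc t * m.choose k * μ.esymmMean k = t * (m.choose k * μ.esymmMean k) := by ring
      _ ≤ m.choose (k + 1) * μ.esymmMean (k + 1) := hstep
      _ ≤ m.choose (k + 1) * (μ.esymmMean k * μ.esymmMean 1) :=
          mul_le_mul_of_nonneg_left hmac (hchoose (k + 1) hk).le
      _ = m.choose (k + 1) * μ.esymmMean 1 * μ.esymmMean k := by ring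
  have hid : (m.choose (k + 1) : ℝ) * (k + 1) = m.choose k * (m - k) := by
    have := Nat.choose_succ_right_eq m k
    rw [← Nat.cast_sub (by omega : k ≤ m)]
    exact_mod_cast this
  have hm : (0 : ℝ) < m := by exact_mod_cast (by omega : 0 < m)
  rw [hE1, mul_div_assoc', le_div_iff₀ hm] at ht'
  refine le_of_mul_le_mul_left ?_ (hchoose k (by omega))
  linear_combination (k + 1 : ℝ) * ht' + μ.esymm 1 * hid

end Multiset

theorem Nat.sub_mul_choose_le_mul_choose_succ {m j k : ℕ} (hjk : j < k) :
    (m + 1 - k) * m.choose j ≤ k * m.choose (j + 1) := by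
  refine Nat.le_of_mul_le_mul_right ?_ (Nat.succ_pos j)
  calc (m + 1 - k) * m.choose j * (j + 1) = m.choose j * ((m + 1 - k) * (j + 1)) := by ring
    _ ≤ m.choose j * ((m - j) * k) := Nat.mul_le_mul_left _ (Nat.mul_le_mul (by omega) hjk)
    _ = k * m.choose (j + 1) * (j + 1) := by rw [mul_assoc k, Nat.choose_succ_right_eq]; ring

theorem Finset.val_map_eq_cons_map_erase {α β : Type*} [DecidableEq α] {s : Finset α} {a : α}
    (ha : a ∈ s) (f : α → β) : s.val.map f = f a ::ₘ (s.erase a).val.map f := by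
  rw [← Multiset.map_cons, Finset.erase_val, Multiset.cons_erase ha]

theorem GardingCone.mul_add_mul_sum_nonneg {n k : ℕ} (hk : 1 ≤ k) (hkn : k < n)
    {l : Fin n → ℝ} (hl : l ∈ GardingCone n k) (i : Fin n) :
    0 ≤ n * (k - 1) * l i + (n - k) * ∑ j, l j := by
  have hsum : 0 ≤ ∑ j, l j := by
    have := hl 1 (mem_Icc.2 ⟨le_rfl, hk⟩)
    rwa [Multiset.esymm_one, ← sum_eq_multiset_sum] at this
  have hk' : (1 : ℝ) ≤ k := by exact_mod_cast hk
  have hkn' : (k : ℝ) < n := by exact_mod_cast hkn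
  rcases le_or_gt 0 (l i) with hi | hi
  · have : 0 ≤ n * (k - 1) * l i := by positivity
    nlinarith
  obtain ⟨k, rfl⟩ : ∃ k', k = k' + 1 := ⟨k - 1, by omega⟩
  have hsplit := val_map_eq_cons_map_erase (mem_univ i) l
  set μ := (univ.erase i).val.map l
  have hμ : (Multiset.card μ : ℝ) = n - 1 := by
    simp [μ, Nat.cast_sub (by omega : 1 ≤ n)]
  have hbound := Multiset.mul_succ_mul_card_le_esymm_one (μ := μ) (t := -l i) (k := k) (by linarith)
    (by simp [μ]; omega) fun j hj => by
      have := hl (j + 1) (mem_Icc.2 ⟨by omega, by omega⟩)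
      rw [hsplit, Multiset.esymm_cons_succ] at this
      linarith
  have hsum_split : ∑ j, l j = l i + μ.esymm 1 := by
    rw [sum_eq_multiset_sum, hsplit, Multiset.sum_cons, Multiset.esymm_one]
  rw [hμ] at hbound
  rw [hsum_split]
  push_cast
  nlinarith [hbound]

-- `σ_k` vanishes here: a boundary point of `Γ^k` where `mul_add_mul_sum_nonneg` is sharp.
noncomputable def gardingExtremal (n k : ℕ) (i : Fin n) : Fin n → ℝ :=
  Function.update (fun _ => (k : ℝ)) i (-(n - k))

theorem univ_val_map_gardingExtremal (n k : ℕ) (i : Fin n) :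
    univ.val.map (gardingExtremal n k i) =
      -(n - k : ℝ) ::ₘ Multiset.replicate (n - 1) (k : ℝ) := by
  rw [val_map_eq_cons_map_erase (mem_univ i), gardingExtremal, Function.update_self,
    Multiset.map_congr rfl fun j hj => Function.update_of_ne (ne_of_mem_erase hj) _ _,
    Multiset.map_const', card_val, card_erase_of_mem (mem_univ i), card_univ, Fintype.card_fin]

theorem sum_gardingExtremal (n k : ℕ) (i : Fin n) :
    ∑ j, gardingExtremal n k i j = n * (k - 1) := by
  rw [sum_eq_multiset_sum, univ_val_map_gardingExtremal, Multiset.sum_cons,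
    Multiset.sum_replicate, nsmul_eq_mul, Nat.cast_sub (by have := i.pos; omega)]
  ring

theorem gardingExtremal_mem_gardingCone {n k : ℕ} (hkn : k ≤ n) (i : Fin n) :
    gardingExtremal n k i ∈ GardingCone n k := by
  intro j hj
  rw [mem_Icc] at hj
  obtain ⟨j, rfl⟩ : ∃ j', j = j' + 1 := ⟨j - 1, by omega⟩
  obtain ⟨m, rfl⟩ : ∃ m, n = m + 1 := ⟨n - 1, by have := i.pos; omega⟩
  rw [univ_val_map_gardingExtremal, Multiset.esymm_cons_succ, Multiset.esymm_replicate,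
    Multiset.esymm_replicate, Nat.add_sub_cancel]
  have key : ((m + 1 : ℕ) - k : ℝ) * m.choose j ≤ k * m.choose (j + 1) := by
    rw [← Nat.cast_sub hkn]
    exact_mod_cast Nat.sub_mul_choose_le_mul_choose_succ (m := m) (by omega : j < k)
  have : 0 ≤ (k : ℝ) ^ j * (k * m.choose (j + 1) - ((m + 1 : ℕ) - k) * m.choose j) :=
    mul_nonneg (by positivity) (by linarith)
  linear_combination this

/-- for `1 ≤ k ≤ n/2`, the critical exponent
`p_{Γ^k} = max {p : Γ^k ⊆ A^(p)}` equals `n(k-1)/(n-k) + 2`, a value lying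
in `[2, n]`. -/
theorem pGamma_k_value (n k : ℕ) (hk : 1 ≤ k) (hkn : 2 * k ≤ n) :
    IsGreatest {p : ℝ | GardingCone n k ⊆ Acone n p}
      ((n : ℝ) * ((k : ℝ) - 1) / ((n : ℝ) - k) + 2) ∧
    2 ≤ (n : ℝ) * ((k : ℝ) - 1) / ((n : ℝ) - k) + 2 ∧
    (n : ℝ) * ((k : ℝ) - 1) / ((n : ℝ) - k) + 2 ≤ (n : ℝ) := by
  have hk' : (1 : ℝ) ≤ k := by exact_mod_cast hk
  have hkn' : 2 * (k : ℝ) ≤ n := by exact_mod_cast hkn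
  have hnk : (0 : ℝ) < n - k := by linarith
  refine ⟨⟨fun l hl i => ?_, fun p hp => ?_⟩, ?_, ?_⟩
  · rw [add_sub_cancel_right, div_mul_eq_mul_div, div_add' _ _ _ hnk.ne']
    have := GardingCone.mul_add_mul_sum_nonneg hk (by omega) hl i
    exact div_nonneg (by linarith) hnk.le
  · let i : Fin n := ⟨0, by omega⟩
    have hA := hp (gardingExtremal_mem_gardingCone (by omega) i) i
    rw [sum_gardingExtremal, gardingExtremal, Function.update_self] at hA
    rw [← sub_le_iff_le_add, le_div_iff₀ hnk]
    linarith
  · have : 0 ≤ (n : ℝ) * (k - 1) / (n - k) := div_nonneg (by nlinarith) hnk.le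
    linarith
  · rw [div_add' _ _ _ hnk.ne', div_le_iff₀ hnk]
    nlinarith
end
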